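/- Let n be a positive integer, Q = 2n + 2, c = n!/(4(π/2)^{n+1}), and for t > 0 and g = (s,z) ∈ ℋ_n set S(t,g) = c/(|z|² + t − i s)^{n+1}. Then for every t > 0, τ > 0 and g = (s,z) ∈ ℋ_n with g ≠ 0, |S(t,g) − S(t+τ², g)| ≤ c(n+1) τ² / ‖g‖^{Q+2}, where ‖g‖ = (|z|⁴ + s²)^{1/4} is the homogeneous norm. -/

import Mathlib

noncomputable section

/-- A point of the Heisenberg group ℋ_n : `(s, z) ∈ ℝ × ℂⁿ`. -/
abbrev Heis (n : ℕ) := ℝ × (Fin n → ℂ)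

/-- `|z|² = ∑ⱼ |zⱼ|²`. -/
def znormSq {n : ℕ} (z : Fin n → ℂ) : ℝ := ∑ j, Complex.normSq (z j)

/-- The homogeneous norm `‖(s,z)‖ = (|z|⁴ + s²)^{1/4}`. -/
def hnorm {n : ℕ} (g : Heis n) : ℝ := ((znormSq g.2) ^ 2 + g.1 ^ 2) ^ (1/4 : ℝ)

/-- The constant `c = n! / (4 (π/2)^{n+1})`. -/
def szegoConst (n : ℕ) : ℝ := (Nat.factorial n : ℝ) / (4 * (Real.pi / 2) ^ (n + 1))

/-- The Cauchy–Szegő kernel `S(t,g) = c/(|z|² + t − i s)^{n+1}` on the Siegel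
upper half space associated to ℋ_n. -/
def Szego (n : ℕ) (t : ℝ) (g : Heis n) : ℂ :=
  (szegoConst n : ℂ) / (((znormSq g.2 : ℝ) : ℂ) + (t : ℂ) - Complex.I * (g.1 : ℂ)) ^ (n + 1)

/-!
The kernel is `c / w^{n+1}` with `w = |z|² + t − i s`, and passing from `t` to `t + τ²` replaces `w`
by `v = w + τ²`, so `|w| ≤ |v|`. Factoring `v^{n+1} − w^{n+1}` as a geometric
sum gives `|w^{-(n+1)} − v^{-(n+1)}| ≤ (n+1) |v − w| / |w|^{n+2}` whenever `|w| ≤ |v|`, and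
`|w| ≥ (|z|⁴ + s²)^{1/2} = ‖g‖²` since `|z|², t ≥ 0`.
-/

section PowerDifferences

variable {𝕜 : Type*} [NormedField 𝕜] {a b : 𝕜}

theorem norm_pow_succ_sub_pow_succ_le (h : ‖b‖ ≤ ‖a‖) (m : ℕ) :
    ‖a ^ (m + 1) - b ^ (m + 1)‖ ≤ (m + 1) * ‖a‖ ^ m * ‖a - b‖ := by
  rw [← geom_sum₂_mul, norm_mul]
  gcongr
  calc ‖∑ i ∈ Finset.range (m + 1), a ^ i * b ^ (m + 1 - 1 - i)‖
      ≤ ∑ i ∈ Finset.range (m + 1), ‖a ^ i * b ^ (m + 1 - 1 - i)‖ := norm_sum_le _ _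
    _ ≤ ∑ _i ∈ Finset.range (m + 1), ‖a‖ ^ m := by
        refine Finset.sum_le_sum fun i hi => ?_
        rw [norm_mul, norm_pow, norm_pow, Nat.add_sub_cancel]
        calc ‖a‖ ^ i * ‖b‖ ^ (m - i) ≤ ‖a‖ ^ i * ‖a‖ ^ (m - i) := by gcongr
          _ = ‖a‖ ^ m := by rw [← pow_add, Nat.add_sub_cancel' (Finset.mem_range_succ_iff.mp hi)]
    _ = (m + 1) * ‖a‖ ^ m := by simp

theorem norm_inv_pow_succ_sub_inv_pow_succ_le (hb : b ≠ 0) (h : ‖b‖ ≤ ‖a‖) (m : ℕ) :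
    ‖(b ^ (m + 1))⁻¹ - (a ^ (m + 1))⁻¹‖ ≤ (m + 1) * ‖a - b‖ / ‖b‖ ^ (m + 2) := by
  have hb' : 0 < ‖b‖ := norm_pos_iff.mpr hb
  have ha' : 0 < ‖a‖ := hb'.trans_le h
  rw [inv_sub_inv (pow_ne_zero _ hb) (pow_ne_zero _ (norm_pos_iff.mp ha')), norm_div, norm_mul,
    norm_pow, norm_pow]
  calc ‖a ^ (m + 1) - b ^ (m + 1)‖ / (‖b‖ ^ (m + 1) * ‖a‖ ^ (m + 1))
      ≤ (m + 1) * ‖a‖ ^ m * ‖a - b‖ / (‖b‖ ^ (m + 1) * ‖a‖ ^ (m + 1)) := by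
        gcongr
        exact norm_pow_succ_sub_pow_succ_le h m
    _ = (m + 1) * ‖a - b‖ / (‖b‖ ^ (m + 1) * ‖a‖) := by
        field_simp
        ring
    _ ≤ (m + 1) * ‖a - b‖ / (‖b‖ ^ (m + 1) * ‖b‖) := by gcongr
    _ = (m + 1) * ‖a - b‖ / ‖b‖ ^ (m + 2) := by rw [← pow_succ]

end PowerDifferences

theorem znormSq_nonneg {n : ℕ} (z : Fin n → ℂ) : 0 ≤ znormSq z :=
  Finset.sum_nonneg fun j _ => Complex.normSq_nonneg (z j)

theorem znormSq_eq_zero_iff {n : ℕ} {z : Fin n → ℂ} : znormSq z = 0 ↔ z = 0 := by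
  simp [znormSq, Finset.sum_eq_zero_iff_of_nonneg fun j _ => Complex.normSq_nonneg (z j),
    funext_iff]

theorem hnorm_pow_four {n : ℕ} (g : Heis n) : hnorm g ^ 4 = znormSq g.2 ^ 2 + g.1 ^ 2 := by
  rw [hnorm, ← Real.rpow_natCast, ← Real.rpow_mul (by positivity)]
  norm_num

theorem hnorm_pos {n : ℕ} {g : Heis n} (hg : g ≠ 0) : 0 < hnorm g := by
  refine Real.rpow_pos_of_pos (lt_of_le_of_ne (by positivity) fun h => hg ?_) _
  obtain ⟨hz, hs⟩ := (add_eq_zero_iff_of_nonneg (sq_nonneg _) (sq_nonneg _)).mp h.symm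
  exact Prod.ext (pow_eq_zero_iff two_ne_zero |>.mp hs)
    (znormSq_eq_zero_iff.mp (pow_eq_zero_iff two_ne_zero |>.mp hz))

theorem szegoConst_pos (n : ℕ) : 0 < szegoConst n := by
  unfold szegoConst
  have := Real.pi_pos
  positivity

def szegoBase {n : ℕ} (t : ℝ) (g : Heis n) : ℂ :=
  (znormSq g.2 : ℂ) + t - Complex.I * g.1

theorem Szego_eq_div_szegoBase_pow (n : ℕ) (t : ℝ) (g : Heis n) :
    Szego n t g = szegoConst n / szegoBase t g ^ (n + 1) := rfl

theorem szegoBase_add {n : ℕ} (t r : ℝ) (g : Heis n) :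
    szegoBase (t + r) g = szegoBase t g + r := by
  simp only [szegoBase, Complex.ofReal_add]
  ring

theorem norm_szegoBase_sq {n : ℕ} (t : ℝ) (g : Heis n) :
    ‖szegoBase t g‖ ^ 2 = (znormSq g.2 + t) ^ 2 + g.1 ^ 2 := by
  have : szegoBase t g = ((znormSq g.2 + t : ℝ) : ℂ) + ((-g.1 : ℝ) : ℂ) * Complex.I := by
    simp only [szegoBase, Complex.ofReal_add, Complex.ofReal_neg]
    ring
  rw [Complex.sq_norm, this, Complex.normSq_add_mul_I, neg_sq]

theorem norm_szegoBase_mono {n : ℕ} (g : Heis n) {t t' : ℝ} (ht : 0 ≤ t) (htt' : t ≤ t') :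
    ‖szegoBase t g‖ ≤ ‖szegoBase t' g‖ := by
  have := znormSq_nonneg g.2
  rw [← pow_le_pow_iff_left₀ (norm_nonneg _) (norm_nonneg _) two_ne_zero, norm_szegoBase_sq,
    norm_szegoBase_sq]
  gcongr

theorem hnorm_sq_eq_norm_szegoBase_zero {n : ℕ} (g : Heis n) :
    hnorm g ^ 2 = ‖szegoBase 0 g‖ := by
  have : 0 ≤ hnorm g := Real.rpow_nonneg (by positivity) _
  rw [← pow_left_inj₀ (by positivity) (norm_nonneg _) two_ne_zero, norm_szegoBase_sq, ← pow_mul,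
    hnorm_pow_four, add_zero]

theorem szego_kernel_difference_pointwise_general (n : ℕ)
    (t τ : ℝ) (ht : 0 < t) (g : Heis n) (hg : g ≠ 0) :
    ‖Szego n t g - Szego n (t + τ ^ 2) g‖ ≤
      szegoConst n * (n + 1) * τ ^ 2 / (hnorm g) ^ ((2 * n + 2) + 2) := by
  set w := szegoBase t g
  set v := szegoBase (t + τ ^ 2) g
  have hvw : v - w = (τ ^ 2 : ℝ) := by simp only [v, w, szegoBase_add, add_sub_cancel_left]
  have hwv : ‖w‖ ≤ ‖v‖ := norm_szegoBase_mono g ht.le (by linarith [sq_nonneg τ])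
  have hgw : hnorm g ^ 2 ≤ ‖w‖ :=
    (hnorm_sq_eq_norm_szegoBase_zero g).trans_le (norm_szegoBase_mono g le_rfl ht.le)
  have hg0 := hnorm_pos hg
  have hw0 : w ≠ 0 := norm_pos_iff.mp ((by positivity : 0 < hnorm g ^ 2).trans_le hgw)
  have hc := (szegoConst_pos n).le
  calc ‖Szego n t g - Szego n (t + τ ^ 2) g‖
      = szegoConst n * ‖(w ^ (n + 1))⁻¹ - (v ^ (n + 1))⁻¹‖ := by
        rw [Szego_eq_div_szegoBase_pow, Szego_eq_div_szegoBase_pow, div_eq_mul_inv,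
          div_eq_mul_inv, ← mul_sub, norm_mul, Complex.norm_real, Real.norm_of_nonneg hc]
    _ ≤ szegoConst n * ((n + 1) * ‖v - w‖ / ‖w‖ ^ (n + 2)) := by
        gcongr
        exact norm_inv_pow_succ_sub_inv_pow_succ_le hw0 hwv n
    _ = szegoConst n * (n + 1) * τ ^ 2 / ‖w‖ ^ (n + 2) := by
        rw [hvw, Complex.norm_real, Real.norm_of_nonneg (sq_nonneg τ)]
        ring
    _ ≤ szegoConst n * (n + 1) * τ ^ 2 / (hnorm g ^ 2) ^ (n + 2) := by gcongr
    _ = szegoConst n * (n + 1) * τ ^ 2 / hnorm g ^ ((2 * n + 2) + 2) := by ring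

/-- Pointwise difference estimate for the Cauchy–Szegő kernel. -/
theorem szego_kernel_difference_pointwise (n : ℕ) (hn : 0 < n)
    (t τ : ℝ) (ht : 0 < t) (hτ : 0 < τ) (g : Heis n) (hg : g ≠ 0) :
    ‖Szego n t g - Szego n (t + τ ^ 2) g‖ ≤
      szegoConst n * (n + 1) * τ ^ 2 / (hnorm g) ^ ((2 * n + 2) + 2) :=
  szego_kernel_difference_pointwise_general n t τ ht g hg
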